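/- There exists a Hamilton-connected graph that is not paired 2-coverable; specifically, the graph obtained from the 3-dimensional hypercube Q_3 by adding the edges {000,011} and {100,111} is Hamilton-connected but admits no paired 2-disjoint path cover for S = {000, 100} and T = {101, 001}. -/

import Mathlib

/-- A graph is Hamilton-connected if every pair of distinct vertices is joined
by a Hamilton path. -/
def HamiltonConnected {V : Type*} [DecidableEq V] (G : SimpleGraph V) : Prop :=
  ∀ u v : V, u ≠ v → ∃ p : G.Walk u v, p.IsHamiltonian

/-- The 3-dimensional hypercube with the two extra edges {000,011} and {100,111}. -/
def GExample : SimpleGraph (Fin 3 → Fin 2) where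
  Adj x y := x ≠ y ∧
    ((Finset.univ.filter (fun i => x i ≠ y i)).card = 1 ∨
      ({x, y} : Set (Fin 3 → Fin 2)) = {![0,0,0], ![0,1,1]} ∨
      ({x, y} : Set (Fin 3 → Fin 2)) = {![1,0,0], ![1,1,1]})
  symm := by
    constructor
    rintro x y ⟨hne, h⟩
    refine ⟨hne.symm, ?_⟩
    rcases h with h | h | h
    · left
      rw [show (Finset.univ.filter (fun i => y i ≠ x i)) =
          (Finset.univ.filter (fun i => x i ≠ y i)) from by
        apply Finset.filter_congr; intro i _; simp [ne_comm]]
      exact h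
    · right; left; rw [Set.pair_comm]; exact h
    · right; right; rw [Set.pair_comm]; exact h
  loopless := ⟨fun x h => h.1 rfl⟩

instance : DecidableRel GExample.Adj := fun x y =>
  decidable_of_iff (x ≠ y ∧
    ((Finset.univ.filter (fun i => x i ≠ y i)).card = 1 ∨
      ((x = ![0,0,0] ∧ y = ![0,1,1]) ∨ (x = ![0,1,1] ∧ y = ![0,0,0])) ∨
      ((x = ![1,0,0] ∧ y = ![1,1,1]) ∨ (x = ![1,1,1] ∧ y = ![1,0,0])))) (by
    show _ ↔ GExample.Adj x y
    unfold GExample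
    simp only [Set.pair_eq_pair_iff])

section PL
variable {V : Type*} [DecidableEq V] (G : SimpleGraph V) [DecidableRel G.Adj]

/-- All supports of paths from `u` to `v` avoiding `vis`, of length `< n`,
where `verts` lists all vertices. -/
def pl (verts : List V) : ℕ → V → V → List V → List (List V)
  | 0, _, _, _ => []
  | n+1, u, v, vis =>
    (if u = v then [[u]] else []) ++
    ((verts.filter fun w => decide (G.Adj u w) && decide (w ∉ vis) && decide (w ≠ u)).flatMap
      fun w => (pl verts n w v (u :: vis)).map (u :: ·))

lemma pl_sound (verts : List V) : ∀ (n : ℕ) (u v : V) (vis : List V) (l : List V),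
    l ∈ pl G verts n u v vis → ∃ p : G.Walk u v, p.support = l := by
  intro n
  induction n with
  | zero => intro u v vis l h; simp [pl] at h
  | succ n ih =>
    intro u v vis l h
    simp only [pl, List.mem_append] at h
    rcases h with h | h
    · split_ifs at h with huv
      · subst huv
        simp at h
        subst h
        exact ⟨SimpleGraph.Walk.nil, rfl⟩
      · simp at h
    · simp only [List.mem_flatMap, List.mem_map, List.mem_filter, Bool.and_eq_true,
        decide_eq_true_eq] at h
      obtain ⟨w, ⟨-, ⟨hadj, -⟩, -⟩, l', hl', rfl⟩ := h
      obtain ⟨p, hp⟩ := ih w v (u :: vis) l' hl'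
      exact ⟨SimpleGraph.Walk.cons hadj p, by simp [hp]⟩

lemma pl_complete (verts : List V) (hverts : ∀ x : V, x ∈ verts) :
    ∀ {u v : V} (p : G.Walk u v) (n : ℕ) (vis : List V),
    p.IsPath → p.length < n → (∀ x ∈ p.support, x ∉ vis) →
    p.support ∈ pl G verts n u v vis := by
  intro u v p
  induction p with
  | nil =>
    intro n vis _ hn _
    obtain ⟨m, rfl⟩ : ∃ m, n = m + 1 := ⟨n - 1, by omega⟩
    simp [pl]
  | @cons u w v hadj p ih =>
    intro n vis hpath hn hvis
    obtain ⟨m, rfl⟩ : ∃ m, n = m + 1 := ⟨n - 1, by omega⟩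
    have hpath' := hpath.of_cons
    have hu : u ∉ p.support := ((SimpleGraph.Walk.cons_isPath_iff _ _).mp hpath).2
    simp only [pl, List.mem_append, List.mem_flatMap, List.mem_map, List.mem_filter,
      Bool.and_eq_true, decide_eq_true_eq]
    right
    refine ⟨w, ⟨hverts w, ⟨hadj, ?_⟩, fun h => hu (h ▸ p.start_mem_support)⟩,
      p.support, ?_, by simp⟩
    · exact hvis w (by simp)
    · refine ih m (u :: vis) hpath' (by simpa using hn) ?_
      intro x hx
      simp only [List.mem_cons, not_or]
      exact ⟨fun h => hu (h ▸ hx), hvis x (by simp [hx])⟩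

end PL

def verts : List (Fin 3 → Fin 2) :=
  [![0,0,0],![0,0,1],![0,1,0],![0,1,1],![1,0,0],![1,0,1],![1,1,0],![1,1,1]]

set_option maxHeartbeats 16000000 in
theorem posKey : ∀ u v : Fin 3 → Fin 2, u ≠ v →
    ∃ l ∈ pl GExample verts 8 u v [], l.length = 8 ∧ l.Nodup := by decide

set_option maxHeartbeats 4000000 in
theorem negKey : ∀ lp ∈ pl GExample verts 8 ![0,0,0] ![1,0,1] [],
    ∀ lq ∈ pl GExample verts 8 ![1,0,0] ![0,0,1] [],
    ¬((∀ z, z ∈ lp → z ∉ lq) ∧ (∀ z : Fin 3 → Fin 2, z ∈ lp ∨ z ∈ lq)) := by decide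

theorem hamiltonConnected_not_paired2Coverable :
    HamiltonConnected GExample ∧
    ¬ ∃ (P : GExample.Walk ![0,0,0] ![1,0,1]) (Q : GExample.Walk ![1,0,0] ![0,0,1]),
        P.IsPath ∧ Q.IsPath ∧
        (∀ z, z ∈ P.support → z ∉ Q.support) ∧
        (∀ z, z ∈ P.support ∨ z ∈ Q.support) := by
  have hcard : Fintype.card (Fin 3 → Fin 2) = 8 := by decide
  constructor
  · intro u v huv
    obtain ⟨l, hl, hlen, hnd⟩ := posKey u v huv
    obtain ⟨p, hp⟩ := pl_sound GExample verts 8 u v [] l hl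
    refine ⟨p, ?_⟩
    have hmem : ∀ a : Fin 3 → Fin 2, a ∈ l := by
      have huniv : l.toFinset = Finset.univ :=
        Finset.eq_univ_of_card _ (by rw [List.toFinset_card_of_nodup hnd, hlen, hcard])
      intro a
      have : a ∈ l.toFinset := huniv ▸ Finset.mem_univ a
      simpa using this
    intro a
    rw [hp]
    exact List.count_eq_one_of_mem hnd (hmem a)
  · rintro ⟨P, Q, hP, hQ, hdisj, hcov⟩
    have hvs : ∀ x : Fin 3 → Fin 2, x ∈ verts := by decide
    have hPl := pl_complete GExample verts hvs P 8 [] hP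
      (by have := hP.length_lt; omega) (by simp)
    have hQl := pl_complete GExample verts hvs Q 8 [] hQ
      (by have := hQ.length_lt; omega) (by simp)
    exact negKey _ hPl _ hQl ⟨hdisj, hcov⟩
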